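/- arXiv:2309.16387 — 5 statements merged into one kernel-verified Lean document; each statement's English description precedes it below -/
import Mathlib

section
/- For δ ∈ (0,1) and real d ≥ 2, the function Δ(δ,d) := (δ + δ²/d) / (2(1 - (1-1/d)δ + (1/2)(1-1/d)δ²)) is strictly increasing in both δ and d, and satisfies 0 < Δ(δ,d) < 1. -/
noncomputable def P (δ d : ℝ) : ℝ := 1 - (1 - 1/d) * δ + (1/2) * (1 - 1/d) * δ^2

noncomputable def Δ (δ d : ℝ) : ℝ := (δ + δ^2/d) / (2 * P δ d)

noncomputable def Qfun (δ u : ℝ) : ℝ :=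
  (δ + δ^2*u) / (2*(1 - (1-u)*δ + (1/2)*(1-u)*δ^2))

lemma Δ_eq (δ d : ℝ) : Δ δ d = Qfun δ (1/d) := by
  unfold Δ P Qfun
  congr 1 <;> ring

lemma denom_pos (u δ : ℝ) (hu : 0 < u) (h1 : 0 < δ) (h2 : δ < 1) :
    0 < 1 - (1-u)*δ + (1/2)*(1-u)*δ^2 := by
  nlinarith [mul_pos hu h1, sq_nonneg (δ - 1), mul_pos (mul_pos hu h1) h1]

lemma key1 (u δ₁ δ₂ : ℝ) (hu : 0 < u) (hu2 : u ≤ 1/2)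
    (h1 : 0 < δ₁) (h12 : δ₁ < δ₂) (h2 : δ₂ < 1) :
    Qfun δ₁ u < Qfun δ₂ u := by
  have hp1 := denom_pos u δ₁ hu h1 (by linarith)
  have hp2 := denom_pos u δ₂ hu (by linarith) h2
  unfold Qfun
  rw [div_lt_div_iff₀ (by linarith) (by linarith)]
  nlinarith [mul_pos h1 (sub_pos.mpr h12), mul_pos (mul_pos h1 (by linarith : (0:ℝ) < δ₂)) (sub_pos.mpr h12), mul_pos hu (mul_pos h1 (sub_pos.mpr h12)), mul_pos (mul_pos hu (mul_pos h1 (by linarith : (0:ℝ) < δ₂))) (sub_pos.mpr h12), sq_nonneg (δ₂ - δ₁), mul_pos hu h1]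

lemma key2 (δ u₁ u₂ : ℝ) (h1 : 0 < δ) (h2 : δ < 1)
    (hu2 : 0 < u₂) (hu12 : u₂ < u₁) (hu1 : u₁ ≤ 1/2) :
    Qfun δ u₁ < Qfun δ u₂ := by
  have hp1 := denom_pos u₁ δ (by linarith) h1 h2
  have hp2 := denom_pos u₂ δ hu2 h1 h2
  unfold Qfun
  rw [div_lt_div_iff₀ (by linarith) (by linarith)]
  nlinarith [mul_pos (mul_pos (mul_pos h1 h1) (sub_pos.mpr hu12)) (sub_pos.mpr h2), mul_pos h1 h1]

lemma key3 (u δ : ℝ) (hu : 0 < u) (hu2 : u ≤ 1/2) (h1 : 0 < δ) (h2 : δ < 1) :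
    0 < Qfun δ u ∧ Qfun δ u < 1 := by
  have hp := denom_pos u δ hu h1 h2
  unfold Qfun
  constructor
  · apply div_pos
    · nlinarith [mul_pos (mul_pos h1 h1) hu]
    · linarith
  · rw [div_lt_one (by linarith)]
    nlinarith [mul_pos hu h1, mul_pos (mul_pos hu h1) h1]

theorem stmt_1 :
    (∀ d : ℝ, 2 ≤ d → ∀ δ₁ δ₂ : ℝ, 0 < δ₁ → δ₁ < δ₂ → δ₂ < 1 → Δ δ₁ d < Δ δ₂ d) ∧
    (∀ δ : ℝ, 0 < δ → δ < 1 → ∀ d₁ d₂ : ℝ, 2 ≤ d₁ → d₁ < d₂ → Δ δ d₁ < Δ δ d₂) ∧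
    (∀ δ d : ℝ, 0 < δ → δ < 1 → 2 ≤ d → 0 < Δ δ d ∧ Δ δ d < 1) := by
  refine ⟨?_, ?_, ?_⟩
  · intro d hd δ₁ δ₂ h1 h12 h2
    have hd0 : (0:ℝ) < d := by linarith
    rw [Δ_eq, Δ_eq]
    exact key1 (1/d) δ₁ δ₂ (by positivity)
      (by rw [div_le_div_iff₀ hd0 (by norm_num)]; linarith) h1 h12 h2
  · intro δ h1 h2 d₁ d₂ hd1 hd12
    have hd10 : (0:ℝ) < d₁ := by linarith
    have hd20 : (0:ℝ) < d₂ := by linarith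
    rw [Δ_eq, Δ_eq]
    exact key2 δ (1/d₁) (1/d₂) h1 h2 (by positivity)
      (by rw [div_lt_div_iff₀ hd20 hd10]; linarith)
      (by rw [div_le_div_iff₀ hd10 (by norm_num)]; linarith)
  · intro δ d h1 h2 hd
    have hd0 : (0:ℝ) < d := by linarith
    rw [Δ_eq]
    exact key3 (1/d) δ (by positivity)
      (by rw [div_le_div_iff₀ hd0 (by norm_num)]; linarith) h1 h2
end

section
/- Let δ ∈ (0,1) and d ≥ 2. Define the sequence δ₀ = δ, δᵢ = Δ(δᵢ₋₁, d). Then for each fixed i ≥ 1, δᵢ is strictly increasing as a function of integer d ≥ 2 (with δ₀ held fixed), and the corresponding success probability pᵢ = P(δᵢ₋₁, d) is strictly decreasing in d. -/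
noncomputable def dseq (δ d : ℝ) : ℕ → ℝ
  | 0 => δ
  | i + 1 => Δ (dseq δ d i) d

lemma P_pos {δ d : ℝ} (h0 : 0 < δ) (h1 : δ < 1) (hd : 2 ≤ d) : 0 < P δ d := by
  have hd0 : (0:ℝ) < d := by linarith
  have ht : 0 < 1/d := by positivity
  have ht2 : 1/d ≤ 1/2 := by
    apply one_div_le_one_div_of_le <;> linarith
  unfold P
  nlinarith [sq_nonneg δ, mul_pos h0 ht]

lemma Δ_pos {δ d : ℝ} (h0 : 0 < δ) (h1 : δ < 1) (hd : 2 ≤ d) : 0 < Δ δ d := by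
  have hd0 : (0:ℝ) < d := by linarith
  have hP := P_pos h0 h1 hd
  unfold Δ
  positivity

lemma Δ_lt_one {δ d : ℝ} (h0 : 0 < δ) (h1 : δ < 1) (hd : 2 ≤ d) : Δ δ d < 1 := by
  have hd0 : (0:ℝ) < d := by linarith
  have ht : 0 < 1/d := by positivity
  have hP := P_pos h0 h1 hd
  rw [Δ, div_lt_one (by linarith)]
  have key : 2 * P δ d - (δ + δ^2/d) = (1-δ)*(2-δ+2*δ*(1/d)) := by
    unfold P; field_simp; ring
  nlinarith [mul_pos h0 ht]

lemma Δ_lt_d {δ d₁ d₂ : ℝ} (h0 : 0 < δ) (h1 : δ < 1) (hd1 : 2 ≤ d₁)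
    (hd : d₁ < d₂) : Δ δ d₁ < Δ δ d₂ := by
  have hd2 : 2 ≤ d₂ := by linarith
  have hP1 := P_pos h0 h1 hd1
  have hP2 := P_pos h0 h1 hd2
  have htlt : 1/d₂ < 1/d₁ := by
    apply one_div_lt_one_div_of_lt <;> linarith
  rw [Δ, Δ, div_lt_div_iff₀ (by linarith) (by linarith)]
  have key : (δ + δ^2/d₂) * (2 * P δ d₁) - (δ + δ^2/d₁) * (2 * P δ d₂)
      = (1/d₁ - 1/d₂) * δ^3 * (1-δ) := by
    unfold P; ring
  nlinarith [mul_pos (mul_pos (by linarith : (0:ℝ) < 1/d₁ - 1/d₂) (by positivity : (0:ℝ) < δ^3)) (by linarith : (0:ℝ) < 1-δ)]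

lemma Δ_mono_δ {a b d : ℝ} (h0 : 0 < a) (hab : a ≤ b) (h1 : b < 1)
    (hd : 2 ≤ d) : Δ a d ≤ Δ b d := by
  have ha1 : a < 1 := lt_of_le_of_lt hab h1
  have hb0 : 0 < b := lt_of_lt_of_le h0 hab
  have hPa := P_pos h0 ha1 hd
  have hPb := P_pos hb0 h1 hd
  have hd0 : (0:ℝ) < d := by linarith
  have ht : 0 < 1/d := by positivity
  have ht2 : 1/d ≤ 1/2 := by apply one_div_le_one_div_of_le <;> linarith
  rw [Δ, Δ, div_le_div_iff₀ (by linarith) (by linarith)]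
  have key : (b + b^2/d) * (2 * P a d) - (a + a^2/d) * (2 * P b d)
      = (b-a) * (2 - a*b + (2*(1/d))*(a+b) - (1/d)*a*b + (2*(1/d)^2)*(a*b)) := by
    unfold P; ring
  nlinarith [mul_nonneg (by linarith : (0:ℝ) ≤ b-a)
      (by nlinarith [mul_pos h0 hb0, mul_pos (mul_pos ht h0) hb0,
        mul_pos (mul_pos (mul_pos ht ht) h0) hb0] : (0:ℝ) ≤ 2 - a*b + (2*(1/d))*(a+b) - (1/d)*a*b + (2*(1/d)^2)*(a*b))]

lemma P_lt_d {δ d₁ d₂ : ℝ} (h0 : 0 < δ) (h1 : δ < 1) (hd1 : 2 ≤ d₁)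
    (hd : d₁ < d₂) : P δ d₂ < P δ d₁ := by
  have htlt : 1/d₂ < 1/d₁ := by
    apply one_div_lt_one_div_of_lt <;> linarith
  have key : P δ d₁ - P δ d₂ = (1/d₁ - 1/d₂) * (δ - δ^2/2) := by
    unfold P; ring
  nlinarith [mul_pos (by linarith : (0:ℝ) < 1/d₁ - 1/d₂)
      (by nlinarith : (0:ℝ) < δ - δ^2/2)]

lemma P_anti_δ {a b d : ℝ} (h0 : 0 < a) (hab : a ≤ b) (h1 : b < 1)
    (hd : 2 ≤ d) : P b d ≤ P a d := by
  have hd0 : (0:ℝ) < d := by linarith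
  have ht : 0 < 1/d := by positivity
  have ht2 : 1/d ≤ 1/2 := by apply one_div_le_one_div_of_le <;> linarith
  have key : P a d - P b d = (1 - 1/d) * (b-a) * (1 - (a+b)/2) := by
    unfold P; ring
  nlinarith [mul_nonneg (mul_nonneg (by linarith : (0:ℝ) ≤ 1 - 1/d)
      (by linarith : (0:ℝ) ≤ b-a)) (by linarith : (0:ℝ) ≤ 1 - (a+b)/2)]

lemma seq_bounds {δ d : ℝ} (h0 : 0 < δ) (h1 : δ < 1) (hd : 2 ≤ d) :
    ∀ i, 0 < dseq δ d i ∧ dseq δ d i < 1 := by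
  intro i
  induction i with
  | zero => exact ⟨h0, h1⟩
  | succ n ih =>
    exact ⟨Δ_pos ih.1 ih.2 hd, Δ_lt_one ih.1 ih.2 hd⟩

lemma seq_lt {δ d₁ d₂ : ℝ} (h0 : 0 < δ) (h1 : δ < 1) (hd1 : 2 ≤ d₁)
    (hd : d₁ < d₂) : ∀ i, 1 ≤ i → dseq δ d₁ i < dseq δ d₂ i := by
  intro i hi
  induction i with
  | zero => omega
  | succ n ih =>
    have hb1 := seq_bounds h0 h1 hd1 n
    have hb2 := seq_bounds h0 h1 (by linarith : (2:ℝ) ≤ d₂) n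
    have hle : dseq δ d₁ n ≤ dseq δ d₂ n := by
      rcases Nat.eq_zero_or_pos n with h | h
      · subst h; simp [dseq]
      · exact le_of_lt (ih h)
    calc dseq δ d₁ (n+1) = Δ (dseq δ d₁ n) d₁ := rfl
      _ < Δ (dseq δ d₁ n) d₂ := Δ_lt_d hb1.1 hb1.2 hd1 hd
      _ ≤ Δ (dseq δ d₂ n) d₂ := Δ_mono_δ hb1.1 hle hb2.2 (by linarith)
      _ = dseq δ d₂ (n+1) := rfl

theorem stmt_3 (δ : ℝ) (hδ0 : 0 < δ) (hδ1 : δ < 1) :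
    ∀ i : ℕ, 1 ≤ i → ∀ d₁ d₂ : ℕ, 2 ≤ d₁ → d₁ < d₂ →
      dseq δ (d₁ : ℝ) i < dseq δ (d₂ : ℝ) i ∧
      P (dseq δ (d₂ : ℝ) (i - 1)) (d₂ : ℝ) < P (dseq δ (d₁ : ℝ) (i - 1)) (d₁ : ℝ) := by
  intro i hi d₁ d₂ hd1 hd12
  have Hd1 : (2:ℝ) ≤ (d₁:ℝ) := by exact_mod_cast hd1
  have Hd12 : (d₁:ℝ) < (d₂:ℝ) := by exact_mod_cast hd12
  have Hd2 : (2:ℝ) ≤ (d₂:ℝ) := by linarith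
  refine ⟨seq_lt hδ0 hδ1 Hd1 Hd12 i hi, ?_⟩
  set j := i - 1 with hj
  have hb1 := seq_bounds hδ0 hδ1 Hd1 j
  have hb2 := seq_bounds hδ0 hδ1 Hd2 j
  have hle : dseq δ (d₁:ℝ) j ≤ dseq δ (d₂:ℝ) j := by
    rcases Nat.eq_zero_or_pos j with h | h
    · rw [h]; simp [dseq]
    · exact le_of_lt (seq_lt hδ0 hδ1 Hd1 Hd12 j h)
  calc P (dseq δ (d₂:ℝ) j) (d₂:ℝ) ≤ P (dseq δ (d₁:ℝ) j) (d₂:ℝ) :=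
        P_anti_δ hb1.1 hle hb2.2 Hd2
    _ < P (dseq δ (d₁:ℝ) j) (d₁:ℝ) := P_lt_d hb1.1 hb1.2 Hd1 Hd12
end

section
/- Let g(x) = (x + x²)/(1 + x²) and suppose 0 < x < 1/3, 0 < y < 0.22 with x = g(y). Then 1/y > 1/x + 1 - 2x. Equivalently, the inverse recurrence μᵢ = h(μᵢ₋₁), where h is the inverse of g on [0,1/3], satisfies 1/μᵢ > 1/μᵢ₋₁ + 1 - 2μᵢ₋₁ whenever μᵢ₋₁ ∈ (0, 1/3). -/
noncomputable def g (x : ℝ) : ℝ := (x + x^2) / (1 + x^2)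

theorem stmt_8 (x y : ℝ) (hx0 : 0 < x) (hx1 : x < 1/3)
    (hy0 : 0 < y) (hy1 : y < 0.22) (hxy : x = g y) :
    1/y > 1/x + 1 - 2*x := by
  subst hxy
  unfold g at *
  have h1 : (0:ℝ) < 1 + y^2 := by positivity
  have h2 : (0:ℝ) < y + y^2 := by nlinarith
  rw [gt_iff_lt, ← sub_pos]
  have key : 1/y - (1/((y + y^2)/(1 + y^2)) + 1 - 2*((y + y^2)/(1 + y^2)))
      = 4*y^3 / (y*(1+y)*(1+y^2)) := by
    field_simp
    ring
  rw [key]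
  positivity
end

section
/- Let d ≥ 3 be an integer, a = (d+1)/(d+2), b = (d-2)/(d+2), c = d³/(d+2)³, and let x ∈ (0, 1/3). Then (1/a)(1/x) + b - 2cx > 0 and, with g_d(y) = ((1 + 2/d)y + (1 - 2/d)y²)/((1 + 1/d) + (1 - 1/d)y²), one has x < g_d( 1 / ((1/a)(1/x) + b - 2cx) ). -/
set_option maxHeartbeats 1000000 in
theorem stmt_15 (d : ℕ) (hd : 3 ≤ d) (x : ℝ) (hx0 : 0 < x) (hx1 : x < 1/3) :
    let a : ℝ := ((d : ℝ) + 1) / ((d : ℝ) + 2)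
    let b : ℝ := ((d : ℝ) - 2) / ((d : ℝ) + 2)
    let c : ℝ := (d : ℝ)^3 / ((d : ℝ) + 2)^3
    let gd : ℝ → ℝ := fun y =>
      ((1 + 2/(d : ℝ)) * y + (1 - 2/(d : ℝ)) * y^2) /
      ((1 + 1/(d : ℝ)) + (1 - 1/(d : ℝ)) * y^2)
    0 < (1/a) * (1/x) + b - 2*c*x ∧
    x < gd (1 / ((1/a) * (1/x) + b - 2*c*x)) := by
  intro a b c gd
  set D : ℝ := (d:ℝ) with hDdef
  have ha : a = (D + 1) / (D + 2) := rfl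
  have hb : b = (D - 2) / (D + 2) := rfl
  have hc : c = D^3 / (D + 2)^3 := rfl
  have hgddef : gd = fun y =>
      ((1 + 2/D) * y + (1 - 2/D) * y^2) / ((1 + 1/D) + (1 - 1/D) * y^2) := rfl
  clear_value a b c gd
  have hD3 : (3:ℝ) ≤ D := by rw [hDdef]; exact_mod_cast hd
  clear_value D
  clear hDdef
  have hD0 : 0 < D := by linarith
  have hD2 : 0 < D + 2 := by linarith
  have hD1 : 0 < D + 1 := by linarith
  have hxne : x ≠ 0 := ne_of_gt hx0
  set t : ℝ := (1/a) * (1/x) + b - 2*c*x with htdef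
  have htval : t = (D+2)/(D+1) * (1/x) + (D-2)/(D+2) - 2 * (D^3/(D+2)^3) * x := by
    rw [htdef, ha, hb, hc, one_div_div]
  clear_value t
  -- b - c*x > 0
  have hbc : 0 < b - c * x := by
    have heq : b - c * x = ((D-2)*(D+2)^2 - D^3*x) / (D+2)^3 := by
      rw [hb, hc]; field_simp
    rw [heq]
    apply div_pos
    · have h1 : D^3 * x < D^3 * (1/3) := by
        apply mul_lt_mul_of_pos_left hx1; positivity
      nlinarith [sq_nonneg (D-3), mul_nonneg (by linarith : (0:ℝ) ≤ D - 3) (sq_nonneg (D-3))]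
    · positivity
  -- t > 0
  have ht0 : 0 < t := by
    rw [htval]
    have heq : (D+2)/(D+1) * (1/x) + (D-2)/(D+2) - 2 * (D^3/(D+2)^3) * x
        = ((D+2)^4 + (D-2)*(D+2)^2*(D+1)*x - 2*D^3*(D+1)*x^2) / ((D+1)*(D+2)^3*x) := by
      field_simp
    rw [heq]
    apply div_pos
    · have hx2 : x^2 < 1/9 := by nlinarith
      have h1 : 0 ≤ (D-2)*(D+2)^2*(D+1)*x := by
        apply mul_nonneg; apply mul_nonneg; apply mul_nonneg <;> nlinarith
        all_goals positivity
      have h2 : 2*D^3*(D+1)*x^2 < (D+2)^4 := by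
        have : 2*D^3*(D+1)*x^2 < 2*D^3*(D+1)*(1/9) := by
          apply mul_lt_mul_of_pos_left hx2; positivity
        nlinarith [pow_pos hD0 3, pow_pos hD2 4, sq_nonneg D, mul_pos (mul_pos hD0 hD0) hD0]
      linarith
    · positivity
  have htne : t ≠ 0 := ne_of_gt ht0
  refine ⟨ht0, ?_⟩
  -- rewrite gd (1/t)
  have hden : 0 < (D+1)*t^2 + (D-1) := by nlinarith [sq_nonneg t]
  have hgd : gd (1 / t) = ((D+2)*t + (D-2)) / ((D+1)*t^2 + (D-1)) := by
    rw [hgddef]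
    have hden2 : 0 < (1 + 1/D) + (1 - 1/D) * (1/t)^2 := by
      have h1 : (0:ℝ) ≤ 1 - 1/D := by
        rw [sub_nonneg, div_le_one hD0]; linarith
      positivity
    rw [div_eq_div_iff (ne_of_gt hden2) (ne_of_gt hden)]
    field_simp
  rw [hgd]
  rw [lt_div_iff₀ hden]
  -- key identity
  have key : (D+2)*t + (D-2) - x*((D+1)*t^2 + (D-1)) =
      (b - c*x) * (4 * (D^3/(D+2)^3) * (D+1) * x^2) := by
    rw [htval, hb, hc]
    field_simp
    ring
  have hpos : 0 < (b - c*x) * (4 * (D^3/(D+2)^3) * (D+1) * x^2) := by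
    apply mul_pos hbc
    positivity
  linarith
end

section
/- Let d ≥ 2, δ₁, δ₂ ∈ (0,1), and define δ' = ((δ₁+δ₂)/2 + δ₁δ₂/d) / ((1 + 1/d) + (1 - 1/d)(1-δ₁)(1-δ₂)). Assume δ₂ ≥ δ₁. Then δ' < δ₁ if and only if δ₂ - δ₁ < (1 - δ₁) · 2δ₁(d - (d-1)δ₁) / (d + 2δ₁(d - (d-1)δ₁)). -/
theorem stmt_18 (d δ₁ δ₂ : ℝ) (hd : 2 ≤ d)
    (h10 : 0 < δ₁) (h11 : δ₁ < 1) (h20 : 0 < δ₂) (h21 : δ₂ < 1) (h12 : δ₁ ≤ δ₂) :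
    ((δ₁ + δ₂)/2 + δ₁*δ₂/d) / ((1 + 1/d) + (1 - 1/d)*(1 - δ₁)*(1 - δ₂)) < δ₁ ↔
    δ₂ - δ₁ < (1 - δ₁) * (2*δ₁*(d - (d-1)*δ₁)) / (d + 2*δ₁*(d - (d-1)*δ₁)) := by
  have hd0 : (0:ℝ) < d := by linarith
  have hK : (0:ℝ) < d - (d-1)*δ₁ := by nlinarith
  have hM : (0:ℝ) < d + 2*δ₁*(d - (d-1)*δ₁) := by nlinarith
  have hD : (0:ℝ) < (1 + 1/d) + (1 - 1/d)*(1 - δ₁)*(1 - δ₂) := by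
    have h1 : (0:ℝ) < 1/d := by positivity
    have h2 : (0:ℝ) ≤ 1 - 1/d := by
      rw [sub_nonneg, div_le_one hd0]; linarith
    have h3 := mul_nonneg (mul_nonneg h2 (by linarith : (0:ℝ) ≤ 1 - δ₁)) (by linarith : (0:ℝ) ≤ 1 - δ₂)
    linarith
  have hdne : d ≠ 0 := ne_of_gt hd0
  rw [div_lt_iff₀ hD, lt_div_iff₀ hM]
  have heq : (δ₁ * (1 + 1/d + (1 - 1/d)*(1 - δ₁)*(1 - δ₂)) - ((δ₁ + δ₂)/2 + δ₁*δ₂/d)) = ((1 - δ₁) * (2*δ₁*(d - (d-1)*δ₁)) - (δ₂ - δ₁) * (d + 2*δ₁*(d - (d-1)*δ₁))) / (2*d) := by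
    field_simp
    ring
  constructor <;> intro h
  · have h' : 0 < ((1 - δ₁) * (2*δ₁*(d - (d-1)*δ₁)) - (δ₂ - δ₁) * (d + 2*δ₁*(d - (d-1)*δ₁))) / (2*d) := by
      rw [← heq]; linarith
    have h2d : (0:ℝ) < 2*d := by linarith
    have := mul_pos h' h2d
    rw [div_mul_cancel₀ _ (ne_of_gt h2d)] at this
    linarith
  · have h' : 0 < ((1 - δ₁) * (2*δ₁*(d - (d-1)*δ₁)) - (δ₂ - δ₁) * (d + 2*δ₁*(d - (d-1)*δ₁))) / (2*d) :=
      div_pos (by linarith) (by linarith)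
    rw [← heq] at h'
    linarith
end
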